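/- Let f : [0,1] → ℝ be Riemann integrable. Then the limit as n → ∞ of (1/n²) · Σ_{k=1}^{n} Σ_{j=1}^{n} f(min(j,k)/max(j,k)) equals ∫₀¹ f(x) dx. -/

import Mathlib

/-!
By symmetry of `(j, k) ↦ f (min j k / max j k)`, the sum over the square `{1, …, n}²` is twice
the sum over the triangle `j ≤ k` minus the `n` diagonal terms `f 1`. The inner triangular sum
`∑_{j ≤ k} f (j / k)` is `k R_k`, where `R_k` is the right-endpoint Riemann sum of `f` on the
uniform partition of `[0, 1]` into `k` pieces, so `R_k → I`; the mean `(2 / n²) ∑_{k ≤ n} k R_k`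
of the `R_k` with linear weights then tends to `I` as well, while the diagonal contributes
`f 1 / n → 0`.
-/

open Filter

/-- `HasRiemannIntegral f a b I` : for every `ε > 0` there is `δ > 0` such that every
tagged partition of `[a, b]` with mesh `< δ` has Riemann sum within `ε` of `I`. -/
def HasRiemannIntegral (f : ℝ → ℝ) (a b I : ℝ) : Prop :=
  ∀ ε > (0 : ℝ), ∃ δ > (0 : ℝ), ∀ (n : ℕ) (p : Fin (n + 1) → ℝ) (tag : Fin n → ℝ),
    Monotone p → p 0 = a → p (Fin.last n) = b →
    (∀ i : Fin n, p i.castSucc ≤ tag i ∧ tag i ≤ p i.succ) →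
    (∀ i : Fin n, p i.succ - p i.castSucc < δ) →
    |(∑ i : Fin n, f (tag i) * (p i.succ - p i.castSucc)) - I| < ε

open Finset Topology Asymptotics

theorem Finset.sum_Icc_one_eq_sum_range_succ {M : Type*} [AddCommMonoid M] (g : ℕ → M) (n : ℕ) :
    ∑ j ∈ Icc 1 n, g j = ∑ i ∈ range n, g (i + 1) := by
  rw [← Ico_add_one_right_eq_Icc, sum_Ico_eq_sum_range, Nat.add_sub_cancel]
  simp only [add_comm]

theorem Finset.sum_sum_min_max_add_sum_diag {α M : Type*} [LinearOrder α] [AddCommMonoid M]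
    (s : Finset α) (g : α → α → M) :
    ∑ k ∈ s, ∑ j ∈ s, g (min j k) (max j k) + ∑ k ∈ s, g k k =
      2 • ∑ k ∈ s, ∑ j ∈ s with j ≤ k, g j k := by
  have split : ∀ j k, g (min j k) (max j k) =
      (if j ≤ k then g j k else 0) + (if k < j then g k j else 0) := by
    intro j k
    rcases le_or_gt j k with h | h
    · simp [h, h.not_gt]
    · simp [h, h.not_ge, h.le]
  have diag : ∀ k ∈ s, g k k = ∑ j ∈ s, if j = k then g j k else 0 := by
    intro k hk
    rw [sum_ite_eq' s k]
    simp [hk]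
  have le_iff : ∀ j k, (if j ≤ k then g j k else 0) =
      (if j < k then g j k else 0) + (if j = k then g j k else 0) := by
    intro j k
    rcases lt_trichotomy j k with h | rfl | h
    · simp [h, h.le, h.ne]
    · simp
    · simp [h.not_ge, h.not_gt, h.ne']
  simp only [split, sum_add_distrib, sum_congr rfl diag, sum_filter]
  rw [sum_comm (s := s) (t := s) (f := fun k j => if k < j then g k j else 0)]
  simp only [le_iff, sum_add_distrib, two_nsmul]
  abel

theorem Filter.Tendsto.weighted_cesaro {u g : ℕ → ℝ} {L : ℝ} (hu : Tendsto u atTop (𝓝 L))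
    (hg : 0 ≤ g) (hg_sum : Tendsto (fun n ↦ ∑ i ∈ range n, g i) atTop atTop) :
    Tendsto (fun n ↦ (∑ i ∈ range n, g i * u i) / ∑ i ∈ range n, g i) atTop (𝓝 L) := by
  have hsmall : (fun i ↦ g i * (u i - L)) =o[atTop] g := by
    simpa using (isBigO_refl g atTop).mul_isLittleO
      ((isLittleO_one_iff ℝ).2 (tendsto_sub_nhds_zero_iff.2 hu))
  have hdiv := ((hsmall.sum_range hg hg_sum).tendsto_div_nhds_zero).add_const L
  rw [zero_add] at hdiv
  refine hdiv.congr' ?_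
  filter_upwards [hg_sum.eventually_gt_atTop 0] with n hn
  simp only [mul_sub, sum_sub_distrib, ← sum_mul]
  field_simp
  ring

theorem Filter.Tendsto.cesaro_linear_weights {u : ℕ → ℝ} {L : ℝ} (hu : Tendsto u atTop (𝓝 L)) :
    Tendsto (fun n : ℕ ↦ 2 / (n : ℝ) ^ 2 * ∑ k ∈ Icc 1 n, k * u k) atTop (𝓝 L) := by
  have sum_id : ∀ n : ℕ, ∑ i ∈ range (n + 1), (i : ℝ) = n * (n + 1) / 2 := by
    intro n
    induction n with
    | zero => simp
    | succ n ih => rw [sum_range_succ, ih]; push_cast; ring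
  have sum_Icc : ∀ n : ℕ, ∑ k ∈ Icc 1 n, k * u k = ∑ k ∈ range (n + 1), k * u k := by
    intro n
    rw [sum_Icc_one_eq_sum_range_succ, sum_range_succ']
    simp
  have hsum : Tendsto (fun n ↦ ∑ i ∈ range n, (i : ℝ)) atTop atTop := by
    rw [← tendsto_add_atTop_iff_nat 1]
    exact tendsto_atTop_mono (fun n ↦ single_le_sum (fun i _ ↦ Nat.cast_nonneg i)
      (self_mem_range_succ n)) tendsto_natCast_atTop_atTop
  have havg := (hu.weighted_cesaro (fun i ↦ Nat.cast_nonneg i) hsum).comp (tendsto_add_atTop_nat 1)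
  have hratio : Tendsto (fun n : ℕ ↦ 1 + 1 / (n : ℝ)) atTop (𝓝 1) := by
    simpa using tendsto_one_div_atTop_nhds_zero_nat.const_add (1 : ℝ)
  refine (by simpa using hratio.mul havg : Tendsto _ atTop (𝓝 L)).congr' ?_
  filter_upwards [eventually_gt_atTop 0] with n hn
  simp only [sum_id, sum_Icc]
  field_simp

theorem HasRiemannIntegral.tendsto_right_endpoint_sum {f : ℝ → ℝ} {a b I : ℝ}
    (hf : HasRiemannIntegral f a b I) (hab : a ≤ b) :
    Tendsto (fun k : ℕ ↦ (b - a) / k * ∑ j ∈ Icc 1 k, f (a + j * ((b - a) / k)))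
      atTop (𝓝 I) := by
  rw [Metric.tendsto_nhds]
  intro ε hε
  obtain ⟨δ, hδ, hsum⟩ := hf ε hε
  filter_upwards [eventually_ne_atTop 0,
    (tendsto_const_div_atTop_nhds_zero_nat (b - a)).eventually (gt_mem_nhds hδ)] with k hk hmesh
  set h := (b - a) / k
  have hh : 0 ≤ h := div_nonneg (sub_nonneg.2 hab) k.cast_nonneg
  have step : ∀ i : Fin k, a + ((i.succ : ℕ) : ℝ) * h - (a + ((i.castSucc : ℕ) : ℝ) * h) = h := by
    intro i
    simp only [Fin.val_succ, Fin.val_castSucc, Nat.cast_succ]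
    ring
  have hriemann := hsum k (fun i ↦ a + (i : ℕ) * h) (fun i ↦ a + ((i : ℕ) + 1 : ℕ) * h)
    (fun i j hij ↦ by dsimp only; gcongr; exact hij)
    (by simp)
    (by simp only [Fin.val_last, h]; field_simp; ring)
    (fun i ↦ ⟨by simp only [Fin.val_castSucc, Nat.cast_succ]; nlinarith, by simp⟩)
    (fun i ↦ by rw [step]; exact hmesh)
  rw [Real.dist_eq]
  convert hriemann using 3
  rw [sum_Icc_one_eq_sum_range_succ, mul_sum, ← Fin.sum_univ_eq_sum_range]
  exact sum_congr rfl fun i _ ↦ by rw [step, mul_comm]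

theorem norm_limit_riemann (f : ℝ → ℝ) (I : ℝ) (hf : HasRiemannIntegral f 0 1 I) :
    Tendsto (fun n : ℕ => (1 / (n : ℝ) ^ 2) *
        ∑ k ∈ Finset.Icc 1 n, ∑ j ∈ Finset.Icc 1 n,
          f (((min j k : ℕ) : ℝ) / ((max j k : ℕ) : ℝ)))
      atTop (nhds I) := by
  set R : ℕ → ℝ := fun k ↦ 1 / k * ∑ j ∈ Icc 1 k, f (j / k)
  have hR : Tendsto R atTop (𝓝 I) := by
    simpa [R, div_eq_mul_inv] using hf.tendsto_right_endpoint_sum zero_le_one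
  have hdiag : Tendsto (fun n : ℕ ↦ f 1 / n) atTop (𝓝 0) :=
    tendsto_const_div_atTop_nhds_zero_nat (f 1)
  refine (by simpa using hR.cesaro_linear_weights.sub hdiag : Tendsto _ atTop (𝓝 I)).congr' ?_
  filter_upwards [eventually_ne_atTop 0] with n hn
  have hsym := sum_sum_min_max_add_sum_diag (Icc 1 n) fun j k ↦ f ((j : ℝ) / k)
  have htri : ∀ k ∈ Icc 1 n, ∑ j ∈ Icc 1 n with j ≤ k, f ((j : ℝ) / k) = k * R k := by
    intro k hk
    obtain ⟨hk1, hkn⟩ := mem_Icc.1 hk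
    have hk0 : (k : ℝ) ≠ 0 := Nat.cast_ne_zero.2 (by omega)
    rw [show {j ∈ Icc 1 n | j ≤ k} = Icc 1 k by ext j; simp only [mem_filter, mem_Icc]; omega,
      ← mul_assoc, mul_one_div_cancel hk0, one_mul]
  have hone : ∀ k ∈ Icc 1 n, f ((k : ℝ) / k) = f 1 := fun k hk ↦ by
    rw [div_self (Nat.cast_ne_zero.2 (by have := (mem_Icc.1 hk).1; omega))]
  rw [sum_congr rfl htri, sum_congr rfl hone, sum_const, Nat.card_Icc, ← eq_sub_iff_add_eq] at hsym
  rw [hsym, Nat.add_sub_cancel, nsmul_eq_mul, nsmul_eq_mul, Nat.cast_ofNat]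
  field_simp
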